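/- Let S be a numerical semigroup and let I, I' be proper maximum sparse ideals of S with leaders λ and λ' respectively. Then the following are equivalent: (1) I ⊆ I'; (2) λ - λ' ∈ S (where the difference is taken in ℤ and required to be a nonnegative element of S); (3) S \ I' ⊆ S \ I; (4) #(S \ I) - #(S \ I') is a nonnegative integer belonging to S. -/

import Mathlib

/-!
For a proper ideal `I` with Frobenius number `F`, the reflection `x ↦ F - x` maps the
`F + 1 - g` non-gaps in `[0, F]` into `ℕ \ I`, since `F ∉ I`; the latter set has
`g + #(S \ I)` elements. Maximum sparseness says exactly that these two counts agree, so the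
reflection is onto `ℕ \ I`: every `x ∉ I` has `F - x ∈ S`. In particular `F = F - 0 ∈ S`, so `F`
is the leader. Hence `I ⊆ I'` iff the leader of `I'` lies outside `I` iff `λ - λ' ∈ S`, and
`λ - λ' = #(S \ I) - #(S \ I')` because both leaders are `2g - 1 + #(S \ ·)`.
-/

/-- `S` is a numerical semigroup: it contains `0`, is closed under addition,
and has finite complement in `ℕ`. -/
def IsNumericalSemigroup (S : Set ℕ) : Prop :=
  0 ∈ S ∧ (∀ a ∈ S, ∀ b ∈ S, a + b ∈ S) ∧ Sᶜ.Finite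

/-- The genus of `S`: the number of gaps, i.e. of elements of `ℕ \ S`. -/
noncomputable def genus (S : Set ℕ) : ℕ := Sᶜ.ncard

/-- The numConductor of `S`: the smallest integer `c` such that every integer `≥ c`
belongs to `S`. -/
noncomputable def numConductor (S : Set ℕ) : ℕ := sInf {c : ℕ | ∀ m, c ≤ m → m ∈ S}

/-- `I` is an ideal of `S`: a nonempty subset of `S` with `I + S ⊆ I`. -/
def IsIdeal (S I : Set ℕ) : Prop :=
  I.Nonempty ∧ I ⊆ S ∧ ∀ i ∈ I, ∀ s ∈ S, i + s ∈ I

/-- The Frobenius number of an ideal `I`: the largest integer not belonging to `I`. -/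
noncomputable def frobeniusNumber (I : Set ℕ) : ℕ := sSup Iᶜ

/-- `I` is a maximum sparse ideal of `S`: its Frobenius number equals
`2g - 1 + #(S \ I)` where `g` is the genus of `S`. -/
def IsMaxSparse (S I : Set ℕ) : Prop :=
  (frobeniusNumber I : ℤ) = 2 * (genus S : ℤ) - 1 + ((S \ I).ncard : ℤ)

/-- The leader of a proper ideal `I` of `S`: the largest element of `S \ I`. -/
noncomputable def leader (S I : Set ℕ) : ℕ := sSup (S \ I)

open Set

theorem ncard_Iic_inter_add_ncard_compl {S : Set ℕ} {n : ℕ} (h : Sᶜ ⊆ Iic n) :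
    (Iic n ∩ S).ncard + Sᶜ.ncard = n + 1 := by
  have hdiff : Iic n \ S = Sᶜ := by rw [sdiff_eq_compl_inter, inter_eq_left.2 h]
  rw [← hdiff, ncard_inter_add_ncard_sdiff_eq_ncard _ _ (finite_Iic n), ncard_Iic_nat]

theorem frobeniusNumber_notMem {I : Set ℕ} (hfin : Iᶜ.Finite) (hne : Iᶜ.Nonempty) :
    frobeniusNumber I ∉ I :=
  Nat.sSup_mem hne hfin.bddAbove

theorem le_frobeniusNumber {I : Set ℕ} (hfin : Iᶜ.Finite) {x : ℕ} (hx : x ∉ I) :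
    x ≤ frobeniusNumber I :=
  le_csSup hfin.bddAbove hx

namespace IsIdeal

variable {S I : Set ℕ}

theorem compl_finite (hI : IsIdeal S I) (hS : Sᶜ.Finite) : Iᶜ.Finite := by
  obtain ⟨⟨i, hi⟩, -, hadd⟩ := hI
  obtain ⟨N, hN⟩ := hS.bddAbove
  refine (finite_Iic (i + N)).subset fun x hx => ?_
  by_contra hlt
  rw [mem_Iic, not_le] at hlt
  have hxi : x - i ∈ S := by_contra fun h => absurd (hN h) (by omega)
  exact hx (by simpa [Nat.add_sub_cancel' (by omega : i ≤ x)] using hadd i hi _ hxi)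

theorem zero_notMem (hI : IsIdeal S I) (hproper : I ≠ S) : 0 ∉ I := fun h0 =>
  hproper (hI.2.1.antisymm fun s hs => by simpa using hI.2.2 0 h0 s hs)

theorem notMem_of_sub_mem (hI : IsIdeal S I) {a x : ℕ} (ha : a ∉ I) (hxa : x ≤ a)
    (h : a - x ∈ S) : x ∉ I := fun hx =>
  ha (by simpa [Nat.add_sub_cancel' hxa] using hI.2.2 x hx _ h)

theorem ncard_compl (hI : IsIdeal S I) (hS : Sᶜ.Finite) :
    Iᶜ.ncard = genus S + (S \ I).ncard := by
  have hsub : Sᶜ ⊆ Iᶜ := compl_subset_compl.2 hI.2.1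
  rw [← ncard_sdiff_add_ncard_of_subset hsub (hI.compl_finite hS), compl_sdiff_compl, genus,
    add_comm]

end IsIdeal

namespace IsMaxSparse

variable {S I : Set ℕ}

theorem frobeniusNumber_sub_mem (hms : IsMaxSparse S I) (hS : Sᶜ.Finite) (hI : IsIdeal S I)
    (hproper : I ≠ S) {x : ℕ} (hx : x ∉ I) : frobeniusNumber I - x ∈ S := by
  set F := frobeniusNumber I
  have hfin : Iᶜ.Finite := hI.compl_finite hS
  have hFI : F ∉ I := frobeniusNumber_notMem hfin ⟨0, hI.zero_notMem hproper⟩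
  have hSF : Sᶜ ⊆ Iic F := fun y hy =>
    le_frobeniusNumber hfin fun h => hy (hI.2.1 h)
  have hinj : InjOn (F - ·) (Iic F ∩ S) := fun a ha b hb h => by
    simp only [mem_inter_iff, mem_Iic] at ha hb h
    omega
  have hmaps_to : (F - ·) '' (Iic F ∩ S) ⊆ Iᶜ := by
    rintro _ ⟨y, ⟨hyF, hyS⟩, rfl⟩
    exact hI.notMem_of_sub_mem hFI (Nat.sub_le F y) (by rwa [Nat.sub_sub_self hyF])
  have hcard_le : Iᶜ.ncard ≤ ((F - ·) '' (Iic F ∩ S)).ncard := by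
    have hcount := ncard_Iic_inter_add_ncard_compl hSF
    have hcompl := hI.ncard_compl hS
    rw [hinj.ncard_image]
    unfold IsMaxSparse at hms
    rw [genus] at hcompl hms
    omega
  obtain ⟨y, ⟨hyF, hyS⟩, rfl⟩ : x ∈ (F - ·) '' (Iic F ∩ S) := by
    rw [eq_of_subset_of_ncard_le hmaps_to hcard_le hfin]
    exact hx
  rwa [Nat.sub_sub_self hyF]

theorem isGreatest_frobeniusNumber (hms : IsMaxSparse S I) (hS : Sᶜ.Finite) (hI : IsIdeal S I)
    (hproper : I ≠ S) : IsGreatest (S \ I) (frobeniusNumber I) := by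
  have hfin : Iᶜ.Finite := hI.compl_finite hS
  have h0 : 0 ∉ I := hI.zero_notMem hproper
  exact ⟨⟨by simpa using hms.frobeniusNumber_sub_mem hS hI hproper h0,
    frobeniusNumber_notMem hfin ⟨0, h0⟩⟩, fun y hy => le_frobeniusNumber hfin hy.2⟩

theorem leader_eq_frobeniusNumber (hms : IsMaxSparse S I) (hS : Sᶜ.Finite) (hI : IsIdeal S I)
    (hproper : I ≠ S) : leader S I = frobeniusNumber I :=
  (hms.isGreatest_frobeniusNumber hS hI hproper).csSup_eq

theorem leader_mem (hms : IsMaxSparse S I) (hS : Sᶜ.Finite) (hI : IsIdeal S I)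
    (hproper : I ≠ S) : leader S I ∈ S \ I :=
  hms.leader_eq_frobeniusNumber hS hI hproper ▸ (hms.isGreatest_frobeniusNumber hS hI hproper).1

theorem le_leader_and_leader_sub_mem (hms : IsMaxSparse S I) (hS : Sᶜ.Finite)
    (hI : IsIdeal S I) (hproper : I ≠ S) {x : ℕ} (hx : x ∉ I) :
    x ≤ leader S I ∧ leader S I - x ∈ S := by
  rw [hms.leader_eq_frobeniusNumber hS hI hproper]
  exact ⟨le_frobeniusNumber (hI.compl_finite hS) hx, hms.frobeniusNumber_sub_mem hS hI hproper hx⟩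

theorem leader_eq (hms : IsMaxSparse S I) (hS : Sᶜ.Finite) (hI : IsIdeal S I)
    (hproper : I ≠ S) : (leader S I : ℤ) = 2 * (genus S : ℤ) - 1 + ((S \ I).ncard : ℤ) := by
  rw [hms.leader_eq_frobeniusNumber hS hI hproper]
  exact hms

end IsMaxSparse

/-- For proper maximum sparse ideals `I`, `I'` with leaders `λ`, `λ'`, the
following are equivalent: (1) `I ⊆ I'`; (2) `λ' ≤ λ` and `λ - λ' ∈ S`;
(3) `S \ I' ⊆ S \ I`; (4) `#(S \ I') ≤ #(S \ I)` and
`#(S \ I) - #(S \ I') ∈ S`. -/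
theorem maxSparse_inclusion_tfae (S I I' : Set ℕ)
    (hS : IsNumericalSemigroup S)
    (hI : IsIdeal S I) (hproperI : I ≠ S) (hmsI : IsMaxSparse S I)
    (hI' : IsIdeal S I') (hproperI' : I' ≠ S) (hmsI' : IsMaxSparse S I') :
    [ I ⊆ I',
      leader S I' ≤ leader S I ∧ leader S I - leader S I' ∈ S,
      S \ I' ⊆ S \ I,
      (S \ I').ncard ≤ (S \ I).ncard ∧ (S \ I).ncard - (S \ I').ncard ∈ S
    ].TFAE := by
  obtain ⟨-, hadd, hSfin⟩ := hS
  have hlead := hmsI.leader_eq hSfin hI hproperI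
  have hlead' := hmsI'.leader_eq hSfin hI' hproperI'
  tfae_have 1 ↔ 3 := ⟨fun h => sdiff_subset_sdiff_right h,
    fun h x hx => by_contra fun hx' => (h ⟨hI.2.1 hx, hx'⟩).2 hx⟩
  tfae_have 3 → 2 := fun h =>
    hmsI.le_leader_and_leader_sub_mem hSfin hI hproperI (h (hmsI'.leader_mem hSfin hI' hproperI')).2
  tfae_have 2 → 3 := by
    rintro ⟨hle, hmem⟩ s ⟨hsS, hsI'⟩
    obtain ⟨hs, hsub⟩ := hmsI'.le_leader_and_leader_sub_mem hSfin hI' hproperI' hsI'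
    have hsum : leader S I - s = (leader S I - leader S I') + (leader S I' - s) := by omega
    exact ⟨hsS, hI.notMem_of_sub_mem (hmsI.leader_mem hSfin hI hproperI).2 (by omega)
      (hsum ▸ hadd _ hmem _ hsub)⟩
  tfae_have 2 ↔ 4 := by
    have hdiff : leader S I - leader S I' = (S \ I).ncard - (S \ I').ncard := by omega
    rw [hdiff]
    exact and_congr_left' (by omega)
  tfae_finish
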